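/- (Overflow detection) With notation as before, if 2w* ≥ w_th, then the image of det(B) in the truncated ring 𝔽₂[X]/(X^{w_th}) is zero; conversely, if 2w* < w_th and the minimum-weight perfect matching is unique, the image of det(B) in 𝔽₂[X]/(X^{w_th}) is nonzero with minimal-degree term X^{2w*}. -/

import Mathlib

open Polynomial Finset
open scoped Classical

noncomputable section

/-- The truncated polynomial ring `𝔽₂[X]/(X^{w_th})`. -/
abbrev Rq (n : ℕ) : Type :=
  Polynomial (ZMod 2) ⧸ Ideal.span {(X : Polynomial (ZMod 2)) ^ n}

/-- The canonical representative of degree `< n` of an element of `𝔽₂[X]/(Xⁿ)`. -/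
noncomputable def rep (n : ℕ) (a : Rq n) : Polynomial (ZMod 2) :=
  (Ideal.Quotient.mk_surjective a).choose %ₘ ((X : Polynomial (ZMod 2)) ^ n)

/-- `M` is a perfect matching of `G` given as a set of edges. -/
def IsPM {m : ℕ} (G : SimpleGraph (Fin m)) (M : Finset (Sym2 (Fin m))) : Prop :=
  (∀ e ∈ M, e ∈ G.edgeSet) ∧ ∀ v : Fin m, ∃! e, e ∈ M ∧ v ∈ e

/-!
In characteristic two the determinant of a symmetric matrix is its permanent, and the terms
of `σ` and `σ⁻¹` cancel unless `σ` is an involution. For `B` the surviving terms are the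
fixed-point-free involutions along edges of `G`, i.e. the perfect matchings `M`, each
contributing `X^{2w(M)}`. So the coefficient of `X^k` in `det B` is the parity of the number of
perfect matchings with `2w(M) = k`: it vanishes for `k < 2w*` and equals `1` at `k = 2w*`
when the minimum-weight matching is unique. Reduction modulo `X^{w_th}` keeps exactly the
coefficients below `w_th`.
-/

namespace Matrix

variable {n R : Type*} [Fintype n] [DecidableEq n] [CommRing R] [CharP R 2]

theorem det_eq_permanent_of_charTwo (A : Matrix n n R) : A.det = A.permanent := by
  rw [det_apply, permanent]
  refine sum_congr rfl fun σ _ => ?_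
  rcases Int.units_eq_one_or (Equiv.Perm.sign σ) with h | h <;>
    simp [h, Units.smul_def, CharTwo.neg_eq]

theorem IsSymm.det_eq_sum_involutions_of_charTwo {A : Matrix n n R} (hA : A.IsSymm) :
    A.det = ∑ σ ∈ univ.filter (fun σ : Equiv.Perm n => σ⁻¹ = σ), ∏ i, A (σ i) i := by
  have prod_inv : ∀ σ : Equiv.Perm n, ∏ i, A (σ⁻¹ i) i = ∏ i, A (σ i) i := fun σ =>
    calc ∏ i, A (σ⁻¹ i) i = ∏ i, A (σ⁻¹ (σ i)) (σ i) := (Equiv.prod_comp σ _).symm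
      _ = ∏ i, A (σ i) i := by simp [hA.apply]
  rw [det_eq_permanent_of_charTwo, permanent,
    ← sum_filter_add_sum_filter_not univ (fun σ : Equiv.Perm n => σ⁻¹ = σ), add_eq_left]
  refine sum_involution (fun σ _ => σ⁻¹) (fun σ _ => by rw [prod_inv, CharTwo.add_self_eq_zero])
    (fun σ hσ _ => (mem_filter.1 hσ).2) (fun σ hσ => ?_) (fun σ _ => inv_inv σ)
  simpa [eq_comm] using hσ

end Matrix

namespace SimpleGraph

variable {m : ℕ} (G : SimpleGraph (Fin m)) (w : Sym2 (Fin m) → ℕ) (R : Type*) [CommRing R]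

/-- The matrix `B` of the paper, with entries in `R[X]`. -/
def weightMatrix : Matrix (Fin m) (Fin m) R[X] :=
  Matrix.of fun i j => if G.Adj i j then X ^ w s(i, j) else 0

theorem weightMatrix_isSymm : (G.weightMatrix w R).IsSymm :=
  Matrix.IsSymm.ext fun i j => by simp [weightMatrix, G.adj_comm, Sym2.eq_swap]

theorem prod_weightMatrix (σ : Equiv.Perm (Fin m)) :
    ∏ i, G.weightMatrix w R (σ i) i =
      if ∀ i, G.Adj (σ i) i then X ^ ∑ i, w s(σ i, i) else 0 := by
  split_ifs with h
  · rw [← prod_pow_eq_pow_sum]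
    exact prod_congr rfl fun i _ => by simp [weightMatrix, h i]
  · push Not at h
    obtain ⟨i, hi⟩ := h
    exact prod_eq_zero (mem_univ i) (by simp [weightMatrix, hi])

def adjInvolutions : Finset (Equiv.Perm (Fin m)) :=
  univ.filter fun σ => σ⁻¹ = σ ∧ ∀ i, G.Adj (σ i) i

theorem det_weightMatrix_eq_sum_adjInvolutions [CharP R 2] :
    (G.weightMatrix w R).det = ∑ σ ∈ G.adjInvolutions, X ^ ∑ i, w s(σ i, i) := by
  rw [(G.weightMatrix_isSymm w R).det_eq_sum_involutions_of_charTwo]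
  simp only [prod_weightMatrix, sum_ite, sum_const_zero, add_zero, filter_filter, adjInvolutions]

variable {G}

theorem involutive_of_mem_adjInvolutions {σ : Equiv.Perm (Fin m)} (hσ : σ ∈ G.adjInvolutions) :
    Function.Involutive σ := fun i => by
  nth_rw 1 [← (mem_filter.1 hσ).2.1]
  exact σ.symm_apply_apply i

theorem adj_of_mem_adjInvolutions {σ : Equiv.Perm (Fin m)} (hσ : σ ∈ G.adjInvolutions)
    (i : Fin m) : G.Adj i (σ i) :=
  ((mem_filter.1 hσ).2.2 i).symm

def matchingOf (σ : Equiv.Perm (Fin m)) : Finset (Sym2 (Fin m)) :=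
  univ.image fun i => s(i, σ i)

theorem mem_matchingOf_self (σ : Equiv.Perm (Fin m)) (v : Fin m) : s(v, σ v) ∈ matchingOf σ :=
  mem_image_of_mem _ (mem_univ v)

theorem eq_of_mem_matchingOf {σ : Equiv.Perm (Fin m)} (hσ : Function.Involutive σ)
    {e : Sym2 (Fin m)} (he : e ∈ matchingOf σ) {v : Fin m} (hv : v ∈ e) : e = s(v, σ v) := by
  obtain ⟨i, -, rfl⟩ := mem_image.1 he
  rcases Sym2.mem_iff.1 hv with rfl | rfl
  · rfl
  · rw [hσ, Sym2.eq_swap]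

theorem isPM_matchingOf {σ : Equiv.Perm (Fin m)} (hσ : σ ∈ G.adjInvolutions) :
    IsPM G (matchingOf σ) := by
  refine ⟨fun e he => ?_, fun v => ⟨s(v, σ v), ⟨mem_matchingOf_self σ v, Sym2.mem_mk_left _ _⟩,
    fun e ⟨he, hv⟩ => eq_of_mem_matchingOf (involutive_of_mem_adjInvolutions hσ) he hv⟩⟩
  obtain ⟨i, -, rfl⟩ := mem_image.1 he
  exact G.mem_edgeSet.2 (adj_of_mem_adjInvolutions hσ i)

theorem matchingOf_injOn :
    Set.InjOn (matchingOf : Equiv.Perm (Fin m) → _) G.adjInvolutions := by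
  intro σ hσ τ hτ h
  refine Equiv.ext fun v => ?_
  have hv := eq_of_mem_matchingOf (involutive_of_mem_adjInvolutions hτ)
    (h ▸ mem_matchingOf_self σ v) (Sym2.mem_mk_left v (σ v))
  exact Sym2.congr_right.1 hv

theorem exists_matchingOf_eq {M : Finset (Sym2 (Fin m))} (hM : IsPM G M) :
    ∃ σ ∈ G.adjInvolutions, matchingOf σ = M := by
  choose e he hve using fun v => (hM.2 v).exists
  have e_unique : ∀ v e', e' ∈ M → v ∈ e' → e' = e v :=
    fun v e' h₁ h₂ => (hM.2 v).unique ⟨h₁, h₂⟩ ⟨he v, hve v⟩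
  let f : Fin m → Fin m := fun v => Sym2.Mem.other (hve v)
  have e_eq : ∀ v, s(v, f v) = e v := fun v => Sym2.other_spec (hve v)
  have adj : ∀ v, G.Adj v (f v) := fun v => G.mem_edgeSet.1 (e_eq v ▸ hM.1 _ (he v))
  have hf : Function.Involutive f := fun v => by
    have h : e (f v) = e v := (e_unique (f v) (e v) (he v) (e_eq v ▸ Sym2.mem_mk_right _ _)).symm
    rw [← e_eq, ← e_eq, Sym2.eq_swap (a := v)] at h
    exact Sym2.congr_right.1 h
  refine ⟨hf.toPerm f, mem_filter.2 ⟨mem_univ _, ?_, fun i => (adj i).symm⟩, ?_⟩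
  · exact inv_eq_of_mul_eq_one_left (Equiv.ext hf)
  · ext e'
    refine ⟨fun h' => ?_, fun h' => ?_⟩
    · obtain ⟨i, -, rfl⟩ := mem_image.1 h'
      exact (e_eq i).symm ▸ he i
    · rw [e_unique _ e' h' (Sym2.out_fst_mem e'), ← e_eq]
      exact mem_matchingOf_self (hf.toPerm f) _

/-- Each edge `{i, σ i}` of the matching arises from both of its endpoints. -/
theorem sum_matchingOf {σ : Equiv.Perm (Fin m)} (hσ : σ ∈ G.adjInvolutions)
    (f : Sym2 (Fin m) → ℕ) : ∑ i, f s(i, σ i) = 2 * ∑ e ∈ matchingOf σ, f e := by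
  rw [Finset.sum_comp, mul_sum]
  refine sum_congr rfl fun e he => ?_
  obtain ⟨i, -, rfl⟩ := mem_image.1 he
  have fiber : univ.filter (fun j => s(j, σ j) = s(i, σ i)) = {i, σ i} := by
    ext j
    simp only [mem_filter, mem_univ, true_and, mem_insert, mem_singleton]
    refine ⟨fun h => ?_, ?_⟩
    · rcases Sym2.eq_iff.1 h with ⟨h, -⟩ | ⟨h, -⟩ <;> simp [h]
    · rintro (rfl | rfl)
      · rfl
      · rw [involutive_of_mem_adjInvolutions hσ, Sym2.eq_swap]
  rw [fiber, card_pair (adj_of_mem_adjInvolutions hσ i).ne, smul_eq_mul]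

variable (G)

def perfectMatchings : Finset (Finset (Sym2 (Fin m))) :=
  univ.filter (IsPM G)

theorem mem_perfectMatchings {M : Finset (Sym2 (Fin m))} :
    M ∈ G.perfectMatchings ↔ IsPM G M := by
  simp [perfectMatchings]

theorem det_weightMatrix [CharP R 2] :
    (G.weightMatrix w R).det = ∑ M ∈ G.perfectMatchings, X ^ (2 * ∑ e ∈ M, w e) := by
  rw [det_weightMatrix_eq_sum_adjInvolutions]
  refine sum_bij (fun σ _ => matchingOf σ)
    (fun σ hσ => G.mem_perfectMatchings.2 (isPM_matchingOf hσ))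
    (fun σ hσ τ hτ => matchingOf_injOn hσ hτ)
    (fun M hM => ?_) (fun σ hσ => ?_)
  · obtain ⟨σ, hσ, rfl⟩ := exists_matchingOf_eq (G.mem_perfectMatchings.1 hM)
    exact ⟨σ, hσ, rfl⟩
  · rw [← sum_matchingOf hσ]
    simp only [Sym2.eq_swap]

end SimpleGraph

namespace Polynomial

theorem coeff_sum_X_pow {ι R : Type*} [Semiring R] (s : Finset ι) (f : ι → ℕ) (k : ℕ) :
    (∑ i ∈ s, (X : R[X]) ^ f i).coeff k = #{i ∈ s | f i = k} := by
  simp [coeff_X_pow, eq_comm]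

theorem natTrailingDegree_eq_of_coeff {R : Type*} [Semiring R] {p : R[X]} {d : ℕ}
    (hd : p.coeff d ≠ 0) (hlt : ∀ k < d, p.coeff k = 0) : p.natTrailingDegree = d :=
  (natTrailingDegree_le_of_ne_zero hd).antisymm
    (le_natTrailingDegree (fun hp => hd (by rw [hp, coeff_zero])) hlt)

theorem mk_span_X_pow_eq_zero_iff {R : Type*} [CommRing R] {n : ℕ} {p : R[X]} :
    Ideal.Quotient.mk (Ideal.span {X ^ n}) p = 0 ↔ ∀ k < n, p.coeff k = 0 := by
  rw [Ideal.Quotient.eq_zero_iff_mem, Ideal.mem_span_singleton, X_pow_dvd_iff]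

theorem mk_rep (n : ℕ) (a : Rq n) : Ideal.Quotient.mk _ (rep n a) = a := by
  obtain ⟨q, hrep, rfl⟩ : ∃ q, rep n a = q %ₘ X ^ n ∧ Ideal.Quotient.mk _ q = a :=
    ⟨_, rfl, (Ideal.Quotient.mk_surjective a).choose_spec⟩
  rw [hrep, Ideal.Quotient.eq, Ideal.mem_span_singleton]
  nth_rw 2 [← modByMonic_add_div q (X ^ n)]
  rw [sub_add_cancel_left, dvd_neg]
  exact dvd_mul_right _ _

theorem coeff_rep_mk {n k : ℕ} (p : (ZMod 2)[X]) (hk : k < n) :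
    (rep n (Ideal.Quotient.mk _ p)).coeff k = p.coeff k := by
  have h := mk_rep n (Ideal.Quotient.mk _ p)
  rw [Ideal.Quotient.eq, Ideal.mem_span_singleton, X_pow_dvd_iff] at h
  simpa [sub_eq_zero] using h k hk

end Polynomial

/-- Overflow detection: if `2w* ≥ w_th` then the image of `det B` in `𝔽₂[X]/(X^{w_th})`
vanishes; conversely, if `2w* < w_th` and the minimum-weight perfect matching is unique,
the image of `det B` is nonzero with minimal-degree term `X^{2w*}`. -/
theorem stmt5 (m : ℕ) (G : SimpleGraph (Fin m)) (w : Sym2 (Fin m) → ℕ) (wth : ℕ)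
    (Mstar : Finset (Sym2 (Fin m))) (wstar : ℕ)
    (hMstar : IsPM G Mstar) (hwstar : wstar = ∑ e ∈ Mstar, w e)
    (hmin : ∀ M, IsPM G M → wstar ≤ ∑ e ∈ M, w e) :
    (wth ≤ 2 * wstar →
      Ideal.Quotient.mk (Ideal.span {(X : Polynomial (ZMod 2)) ^ wth})
        (Matrix.of fun i j =>
          if G.Adj i j then (X : Polynomial (ZMod 2)) ^ (w s(i, j)) else 0).det = 0) ∧
    (2 * wstar < wth →
      (∀ M, IsPM G M → (∑ e ∈ M, w e) = wstar → M = Mstar) →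
      Ideal.Quotient.mk (Ideal.span {(X : Polynomial (ZMod 2)) ^ wth})
        (Matrix.of fun i j =>
          if G.Adj i j then (X : Polynomial (ZMod 2)) ^ (w s(i, j)) else 0).det ≠ 0 ∧
      (rep wth (Ideal.Quotient.mk (Ideal.span {(X : Polynomial (ZMod 2)) ^ wth})
        (Matrix.of fun i j =>
          if G.Adj i j then (X : Polynomial (ZMod 2)) ^ (w s(i, j)) else 0).det)).natTrailingDegree
        = 2 * wstar) := by
  set D := (Matrix.of fun i j =>
    if G.Adj i j then (X : Polynomial (ZMod 2)) ^ (w s(i, j)) else 0).det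
  have coeff_D (k : ℕ) : D.coeff k = #{M ∈ G.perfectMatchings | 2 * ∑ e ∈ M, w e = k} :=
    (congrArg (coeff · k) (G.det_weightMatrix w (ZMod 2))).trans (coeff_sum_X_pow _ _ k)
  have below (k : ℕ) (hk : k < 2 * wstar) : D.coeff k = 0 := by
    rw [coeff_D, filter_eq_empty_iff.2, card_empty, Nat.cast_zero]
    intro M hM
    have := hmin M (G.mem_perfectMatchings.1 hM)
    omega
  refine ⟨fun hle => mk_span_X_pow_eq_zero_iff.2 fun k hk => below k (by omega),
    fun hlt huniq => ?_⟩
  have at_min : D.coeff (2 * wstar) = 1 := by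
    have : {M ∈ G.perfectMatchings | 2 * ∑ e ∈ M, w e = 2 * wstar} = {Mstar} := by
      refine eq_singleton_iff_unique_mem.2
        ⟨mem_filter.2 ⟨G.mem_perfectMatchings.2 hMstar, by rw [hwstar]⟩, fun M hM => ?_⟩
      obtain ⟨hPM, hw⟩ := mem_filter.1 hM
      exact huniq M (G.mem_perfectMatchings.1 hPM) (by omega)
    rw [coeff_D, this, card_singleton, Nat.cast_one]
  refine ⟨fun h => one_ne_zero (at_min ▸ mk_span_X_pow_eq_zero_iff.1 h _ hlt), ?_⟩
  refine natTrailingDegree_eq_of_coeff ?_ fun k hk => ?_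
  · rw [coeff_rep_mk D hlt, at_min]
    exact one_ne_zero
  · rw [coeff_rep_mk D (hk.trans hlt), below k hk]
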